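/- Let (α_k)_{k≥0} be a sequence of positive reals with α_0 ≤ 1 and α_{k+1} = α_k / √(1 + α_k) for all k ≥ 0. Then α_K ≤ 3/K for every integer K > 0. -/

import Mathlib

/-! Since `√(1 + a) ≥ 1 + a/3` for `0 ≤ a ≤ 3`, one step of the recursion increases `1/α`
by at least `1/3`; hence `1/α_K ≥ K/3`. -/

lemma one_add_div_three_le_sqrt_one_add {a : ℝ} (ha : 0 ≤ a) (ha3 : a ≤ 3) :
    1 + a / 3 ≤ √(1 + a) :=
  Real.le_sqrt_of_sq_le (by nlinarith)

lemma div_sqrt_one_add_le {a : ℝ} (ha : 0 ≤ a) : a / √(1 + a) ≤ a :=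
  div_le_self ha (Real.one_le_sqrt.mpr (by linarith))

lemma inv_add_third_le_inv_div_sqrt_one_add {a : ℝ} (ha : 0 < a) (ha3 : a ≤ 3) :
    a⁻¹ + 1 / 3 ≤ (a / √(1 + a))⁻¹ := by
  have hsqrt := one_add_div_three_le_sqrt_one_add ha.le ha3
  calc a⁻¹ + 1 / 3 = (1 + a / 3) / a := by field_simp
    _ ≤ √(1 + a) / a := by gcongr
    _ = (a / √(1 + a))⁻¹ := (inv_div _ _).symm

/-- If α₀ ≤ 1, α_k > 0 and α_{k+1} = α_k / √(1+α_k), then α_K ≤ 3/K for K > 0. -/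
theorem stmt_6 (α : ℕ → ℝ) (hpos : ∀ k, 0 < α k) (h0 : α 0 ≤ 1)
    (hrec : ∀ k, α (k + 1) = α k / Real.sqrt (1 + α k)) :
    ∀ K : ℕ, 0 < K → α K ≤ 3 / (K : ℝ) := by
  have hle : ∀ k, α k ≤ 1 := by
    intro k
    induction k with
    | zero => exact h0
    | succ k ih => exact (hrec k ▸ div_sqrt_one_add_le (hpos k).le).trans ih
  have hinv : ∀ k : ℕ, (k : ℝ) / 3 ≤ (α k)⁻¹ := by
    intro k
    induction k with
    | zero => simpa using (hpos 0).le
    | succ k ih =>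
      have hstep := inv_add_third_le_inv_div_sqrt_one_add (hpos k) (by linarith [hle k])
      rw [hrec k]
      push_cast
      linarith
  intro K hK
  have hK' : (0 : ℝ) < K := by exact_mod_cast hK
  rw [le_div_iff₀ hK', ← le_div_iff₀' (hpos K), div_eq_mul_inv 3]
  linarith [hinv K]
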